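/- arXiv:1306.5594 — 3 statements merged into one kernel-verified Lean document; each statement's English description precedes it below -/
import Mathlib

section
/- Let G be a graph and U ⊆ V(G) with a grouping 𝒰 (a partition of U into groups of G such that any two adjacent groups are fully adjacent to each other). Fix a transversal Ū of 𝒰 (one vertex from each group). Let (V₁,U,V₂) be a node cutset separation of G (V₁ and V₂ nonadjacent in G). For a stable set S' ⊆ V₁ ∪ U, define Hom(S') = { the transversal vertex of X : X ∈ 𝒰, S' ∩ X ≠ ∅ }. Then for any S'' ⊆ V₂, the set S' ∪ S'' is stable in G if and only if Hom(S') ∪ S'' is stable in the induced subgraph G[V₂ ∪ Ū]. -/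
open Finset
open scoped Classical

variable {V : Type*} [Fintype V] [DecidableEq V]

/-- A stable (independent) set. -/
def IsStable (G : SimpleGraph V) (S : Finset V) : Prop :=
  ∀ a ∈ S, ∀ b ∈ S, ¬ G.Adj a b

/-- The neighborhood of a set `X`. -/
noncomputable def nbhd (G : SimpleGraph V) (X : Finset V) : Finset V :=
  (Finset.univ \ X).filter (fun v => ∃ x ∈ X, G.Adj v x)

/-- `X` is fully adjacent to `Y`. -/
def FullyAdj (G : SimpleGraph V) (X Y : Finset V) : Prop :=
  ∀ x ∈ X, ∀ y ∈ Y, G.Adj x y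

/-- A group of `G`. -/
noncomputable def IsGroup (G : SimpleGraph V) (X : Finset V) : Prop :=
  X.Nonempty ∧ FullyAdj G X (nbhd G X)

/-- Two disjoint sets are adjacent if some vertex of one is adjacent to a vertex
of the other. -/
def SetsAdj (G : SimpleGraph V) (X Y : Finset V) : Prop :=
  ∃ x ∈ X, ∃ y ∈ Y, G.Adj x y

/-- with a grouping `𝒰` of the cutset `U`, a transversal `t`, and
`Hom(S') = { t X : X ∈ 𝒰, S' ∩ X ≠ ∅ }`, for any stable `S' ⊆ V₁ ∪ U` and any
`S'' ⊆ V₂`: `S' ∪ S''` is stable in `G` iff `Hom(S') ∪ S''` is stable in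
`G[V₂ ∪ Ū]`. -/
theorem stmt2 (G : SimpleGraph V) (V₁ U V₂ : Finset V)
    (hpart : V₁ ∪ U ∪ V₂ = Finset.univ)
    (hd₁ : Disjoint V₁ U) (hd₂ : Disjoint V₁ V₂) (hd₃ : Disjoint U V₂)
    (hnonadj : ∀ a ∈ V₁, ∀ b ∈ V₂, ¬ G.Adj a b)
    (𝒰 : Finset (Finset V))
    (hcover : 𝒰.sup id = U)
    (hdisj : ∀ X ∈ 𝒰, ∀ Y ∈ 𝒰, X ≠ Y → Disjoint X Y)
    (hgroups : ∀ X ∈ 𝒰, IsGroup G X)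
    (hfull : ∀ X ∈ 𝒰, ∀ Y ∈ 𝒰, X ≠ Y → SetsAdj G X Y → FullyAdj G X Y)
    (t : Finset V → V) (ht : ∀ X ∈ 𝒰, t X ∈ X)
    (S' : Finset V) (hS'sub : S' ⊆ V₁ ∪ U) (hS' : IsStable G S')
    (S'' : Finset V) (hS''sub : S'' ⊆ V₂) :
    IsStable G (S' ∪ S'') ↔
      IsStable G ((𝒰.filter (fun X => (S' ∩ X).Nonempty)).image t ∪ S'') := by

  have hmemnbhd : ∀ (X : Finset V) (b : V), b ∉ X → (∃ x ∈ X, G.Adj b x) → b ∈ nbhd G X := by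
    intro X b hb hx
    simp [nbhd, hb, hx]
  have hXU : ∀ X ∈ 𝒰, X ⊆ U := by
    intro X hX
    rw [← hcover]
    exact Finset.le_sup (f := id) hX
  constructor
  · intro h
    intro a ha b hb hab
    rcases Finset.mem_union.1 ha with ha | ha
    · obtain ⟨X, hX, rfl⟩ := Finset.mem_image.1 ha
      have hXfilt := Finset.mem_filter.1 hX
      obtain ⟨s, hs⟩ := hXfilt.2
      have hsS' : s ∈ S' := (Finset.mem_inter.1 hs).1
      have hsX : s ∈ X := (Finset.mem_inter.1 hs).2
      rcases Finset.mem_union.1 hb with hb | hb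
      · obtain ⟨Y, hY, rfl⟩ := Finset.mem_image.1 hb
        have hYfilt := Finset.mem_filter.1 hY
        obtain ⟨r, hr⟩ := hYfilt.2
        have hrS' : r ∈ S' := (Finset.mem_inter.1 hr).1
        have hrY : r ∈ Y := (Finset.mem_inter.1 hr).2
        by_cases hXY : X = Y
        · subst hXY; exact G.irrefl hab
        · have hadj : SetsAdj G X Y := ⟨t X, ht X hXfilt.1, t Y, ht Y hYfilt.1, hab⟩
          have := hfull X hXfilt.1 Y hYfilt.1 hXY hadj s hsX r hrY
          exact hS' s hsS' r hrS' this
      · -- b ∈ S'' ⊆ V₂, t X ∈ X ⊆ U, so b ∉ X, b ∈ nbhd X, group gives s adj b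
        have hbV₂ : b ∈ V₂ := hS''sub hb
        have hbX : b ∉ X := fun hbX => (Finset.disjoint_left.1 hd₃) (hXU X hXfilt.1 hbX) hbV₂
        have hbn : b ∈ nbhd G X := hmemnbhd X b hbX ⟨t X, ht X hXfilt.1, hab.symm⟩
        have := (hgroups X hXfilt.1).2 s hsX b hbn
        exact h s (Finset.mem_union_left _ hsS') b (Finset.mem_union_right _ hb) this
    · rcases Finset.mem_union.1 hb with hb | hb
      · obtain ⟨Y, hY, rfl⟩ := Finset.mem_image.1 hb
        have hYfilt := Finset.mem_filter.1 hY
        obtain ⟨r, hr⟩ := hYfilt.2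
        have hrS' : r ∈ S' := (Finset.mem_inter.1 hr).1
        have hrY : r ∈ Y := (Finset.mem_inter.1 hr).2
        have haV₂ : a ∈ V₂ := hS''sub ha
        have haY : a ∉ Y := fun haY => (Finset.disjoint_left.1 hd₃) (hXU Y hYfilt.1 haY) haV₂
        have han : a ∈ nbhd G Y := hmemnbhd Y a haY ⟨t Y, ht Y hYfilt.1, hab⟩
        have := (hgroups Y hYfilt.1).2 r hrY a han
        exact h r (Finset.mem_union_left _ hrS') a (Finset.mem_union_right _ ha) this
      · exact h a (Finset.mem_union_right _ ha) b (Finset.mem_union_right _ hb) hab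
  · intro h
    intro a ha b hb hab
    have key : ∀ x ∈ S', ∀ y ∈ S'', ¬ G.Adj x y := by
      intro x hx y hy hxy
      have hyV₂ : y ∈ V₂ := hS''sub hy
      rcases Finset.mem_union.1 (hS'sub hx) with hxV | hxU
      · exact hnonadj x hxV y hyV₂ hxy
      · obtain ⟨X, hX, hxX⟩ := Finset.mem_sup.1 (hcover ▸ hxU)
        have hXfilt : X ∈ 𝒰.filter (fun X => (S' ∩ X).Nonempty) :=
          Finset.mem_filter.2 ⟨hX, ⟨x, Finset.mem_inter.2 ⟨hx, hxX⟩⟩⟩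
        have hyX : y ∉ X := fun hyX => (Finset.disjoint_left.1 hd₃) (hXU X hX hyX) hyV₂
        have hyn : y ∈ nbhd G X := hmemnbhd X y hyX ⟨x, hxX, hxy.symm⟩
        have hadjt : G.Adj (t X) y := (hgroups X hX).2 (t X) (ht X hX) y hyn
        exact h (t X) (Finset.mem_union_left _ (Finset.mem_image_of_mem t hXfilt))
          y (Finset.mem_union_right _ hy) hadjt
    rcases Finset.mem_union.1 ha with ha | ha <;> rcases Finset.mem_union.1 hb with hb | hb
    · exact hS' a ha b hb hab
    · exact key a ha b hb hab
    · exact key b hb a ha hab.symm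
    · exact h a (Finset.mem_union_right _ ha) b (Finset.mem_union_right _ hb) hab
end

section
/- Let H be a graph on vertex set U ∪ {r} with r ∉ U, let 𝒰 be a grouping of U in H, and let P be the union of all 2-element stable sets contained in U. If every nonnegative inclusion-wise non-increasing function d on stable sets of the pattern graph of 𝒰 can be linearized by (H, γ, σ) for some γ ∈ ℝ^{U∪{r}} and σ ∈ ℝ, then P is fully adjacent to r and P is contained in a single member of 𝒰 (or P = ∅). -/
open Finset
open scoped Classical

variable {V : Type*} [Fintype V] [DecidableEq V]

/-- `𝒰` is a grouping of `U` in `G`. -/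
noncomputable def IsGrouping (G : SimpleGraph V) (U : Finset V) (𝒰 : Finset (Finset V)) : Prop :=
  𝒰.sup id = U ∧ (∀ X ∈ 𝒰, ∀ Y ∈ 𝒰, X ≠ Y → Disjoint X Y) ∧
  (∀ X ∈ 𝒰, IsGroup G X) ∧
  (∀ X ∈ 𝒰, ∀ Y ∈ 𝒰, X ≠ Y → SetsAdj G X Y → FullyAdj G X Y)

/-- A collection of groups is stable in the pattern graph if its members are
pairwise nonadjacent. -/
def PatStable (G : SimpleGraph V) (𝒮 : Finset (Finset V)) : Prop :=
  ∀ X ∈ 𝒮, ∀ Y ∈ 𝒮, X ≠ Y → ¬ SetsAdj G X Y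

/-- `S̄`: the members of `𝒰` meeting `S`. -/
noncomputable def bar (𝒰 : Finset (Finset V)) (S : Finset V) : Finset (Finset V) :=
  𝒰.filter (fun X => (X ∩ S).Nonempty)

/-- `(H, γ, σ)` linearizes `d ∘ bar`: for each stable set `T` of `H[U]`, the
maximum of `γ(S)` over stable sets `S` of `H` with `S ∩ U = T` is `d(T̄) - σ`. -/
noncomputable def Linearizes (H : SimpleGraph V) (U : Finset V) (𝒰 : Finset (Finset V))
    (γ : V → ℝ) (σ : ℝ) (d : Finset (Finset V) → ℝ) : Prop :=
  ∀ T : Finset V, T ⊆ U → IsStable H T →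
    IsGreatest {r : ℝ | ∃ S : Finset V, IsStable H S ∧ S ∩ U = T ∧
      r = ∑ v ∈ S, γ v} (d (bar 𝒰 T) - σ)

/-- `d` is nonnegative and inclusion-wise non-increasing on stable sets of the pattern. -/
noncomputable def NonnegNonincr (G : SimpleGraph V) (𝒰 : Finset (Finset V))
    (d : Finset (Finset V) → ℝ) : Prop :=
  (∀ 𝒮 ⊆ 𝒰, PatStable G 𝒮 → 0 ≤ d 𝒮) ∧
  (∀ 𝒮 ⊆ 𝒰, ∀ 𝒮' ⊆ 𝒰, PatStable G 𝒮 → PatStable G 𝒮' → 𝒮 ⊆ 𝒮' → d 𝒮' ≤ d 𝒮)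


section Aux

variable {H : SimpleGraph V} {U : Finset V} {𝒰 : Finset (Finset V)}

lemma isStable_subset {G : SimpleGraph V} {S T : Finset V} (hT : IsStable G T) (h : S ⊆ T) :
    IsStable G S := fun a ha b hb => hT a (h ha) b (h hb)

lemma isStable_singleton (G : SimpleGraph V) (u : V) : IsStable G {u} := by
  intro a ha b hb
  simp only [Finset.mem_singleton] at ha hb
  subst ha; subst hb; exact G.irrefl

lemma isStable_pair {G : SimpleGraph V} {u w : V} (h : ¬ G.Adj u w) : IsStable G {u, w} := by
  intro a ha b hb
  simp only [Finset.mem_insert, Finset.mem_singleton] at ha hb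
  rcases ha with rfl | rfl <;> rcases hb with rfl | rfl
  · exact G.irrefl
  · exact h
  · exact fun hadj => h hadj.symm
  · exact G.irrefl

lemma group_unique (hg : IsGrouping H U 𝒰) {X Y : Finset V} {u : V} (hX : X ∈ 𝒰) (hY : Y ∈ 𝒰)
    (huX : u ∈ X) (huY : u ∈ Y) : X = Y := by
  by_contra hne
  exact Finset.disjoint_left.mp (hg.2.1 X hX Y hY hne) huX huY

lemma exists_group (hg : IsGrouping H U 𝒰) {u : V} (hu : u ∈ U) : ∃ X ∈ 𝒰, u ∈ X := by
  rw [← hg.1] at hu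
  simpa using Finset.mem_sup.mp hu

lemma bar_empty (𝒰 : Finset (Finset V)) : bar 𝒰 (∅ : Finset V) = ∅ := by
  simp [bar]

lemma bar_singleton (hg : IsGrouping H U 𝒰) {X : Finset V} {u : V} (hX : X ∈ 𝒰) (hu : u ∈ X) :
    bar 𝒰 {u} = {X} := by
  ext Z
  simp only [bar, Finset.mem_filter, Finset.mem_singleton]
  constructor
  · rintro ⟨hZ, y, hy⟩
    rw [Finset.mem_inter, Finset.mem_singleton] at hy
    exact group_unique hg hZ hX (hy.2 ▸ hy.1) hu
  · rintro rfl
    exact ⟨hX, u, Finset.mem_inter.mpr ⟨hu, Finset.mem_singleton_self u⟩⟩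

lemma bar_pair (hg : IsGrouping H U 𝒰) {X Y : Finset V} {u w : V} (hX : X ∈ 𝒰) (hY : Y ∈ 𝒰)
    (hu : u ∈ X) (hw : w ∈ Y) : bar 𝒰 {u, w} = {X, Y} := by
  ext Z
  simp only [bar, Finset.mem_filter, Finset.mem_insert, Finset.mem_singleton]
  constructor
  · rintro ⟨hZ, y, hy⟩
    rw [Finset.mem_inter] at hy
    rcases (by simpa using hy.2 : y = u ∨ y = w) with rfl | rfl
    · exact Or.inl (group_unique hg hZ hX hy.1 hu)
    · exact Or.inr (group_unique hg hZ hY hy.1 hw)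
  · rintro (rfl | rfl)
    · exact ⟨hX, u, Finset.mem_inter.mpr ⟨hu, by simp⟩⟩
    · exact ⟨hY, w, Finset.mem_inter.mpr ⟨hw, by simp⟩⟩

lemma lin_mem {r : V} (hU : U = Finset.univ.erase r) {γ : V → ℝ} {σ : ℝ}
    {d : Finset (Finset V) → ℝ} (hlin : Linearizes H U 𝒰 γ σ d)
    {T : Finset V} (hT : T ⊆ U) (hTs : IsStable H T) :
    d (bar 𝒰 T) - σ = ∑ v ∈ T, γ v ∨
      (IsStable H (insert r T) ∧ d (bar 𝒰 T) - σ = γ r + ∑ v ∈ T, γ v) := by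
  obtain ⟨S, hSs, hSU, hsum⟩ := (hlin T hT hTs).1
  have hrU : r ∉ U := by simp [hU]
  have hrT : r ∉ T := fun h => hrU (hT h)
  have hST : S.erase r = T := by
    rw [← hSU, hU]
    ext v
    simp only [Finset.mem_erase, Finset.mem_inter, Finset.mem_univ, and_true]
    tauto
  by_cases hrS : r ∈ S
  · right
    have hS : S = insert r T := by rw [← hST, Finset.insert_erase hrS]
    refine ⟨hS ▸ hSs, ?_⟩
    rw [hsum, hS, Finset.sum_insert hrT]
  · left
    have hS : S = T := by rw [← hST, Finset.erase_eq_of_notMem hrS]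
    rw [hsum, hS]

lemma lin_ub {r : V} (hU : U = Finset.univ.erase r) {γ : V → ℝ} {σ : ℝ}
    {d : Finset (Finset V) → ℝ} (hlin : Linearizes H U 𝒰 γ σ d)
    {T : Finset V} (hT : T ⊆ U) (hTs : IsStable H T) :
    (∑ v ∈ T, γ v ≤ d (bar 𝒰 T) - σ) ∧
      (IsStable H (insert r T) → γ r + ∑ v ∈ T, γ v ≤ d (bar 𝒰 T) - σ) := by
  have h2 := (hlin T hT hTs).2
  have hrU : r ∉ U := by simp [hU]
  have hrT : r ∉ T := fun h => hrU (hT h)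
  constructor
  · exact h2 ⟨T, hTs, Finset.inter_eq_left.mpr hT, rfl⟩
  · intro hst
    refine h2 ⟨insert r T, hst, ?_, (Finset.sum_insert hrT).symm⟩
    rw [Finset.insert_inter_of_notMem hrU]
    exact Finset.inter_eq_left.mpr hT

/-- Exact value for a singleton whose vertex is adjacent to `r`. -/
lemma lin_single_adj {r : V} (hU : U = Finset.univ.erase r) {γ : V → ℝ} {σ : ℝ}
    {d : Finset (Finset V) → ℝ} (hlin : Linearizes H U 𝒰 γ σ d)
    {u : V} (huU : u ∈ U) (hur : H.Adj u r) :
    d (bar 𝒰 {u}) - σ = γ u := by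
  rcases lin_mem hU hlin (Finset.singleton_subset_iff.mpr huU) (isStable_singleton H u) with
    h | ⟨hst, h⟩
  · simpa using h
  · exact absurd hur.symm
      (hst r (Finset.mem_insert_self _ _) u (Finset.mem_insert_of_mem (Finset.mem_singleton_self u)))

/-- Exact value for a stable pair whose first vertex is adjacent to `r`. -/
lemma lin_pair_adj {r : V} (hU : U = Finset.univ.erase r) {γ : V → ℝ} {σ : ℝ}
    {d : Finset (Finset V) → ℝ} (hlin : Linearizes H U 𝒰 γ σ d)
    {u w : V} (huU : u ∈ U) (hwU : w ∈ U) (hne : u ≠ w) (hnadj : ¬ H.Adj u w)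
    (hur : H.Adj u r) :
    d (bar 𝒰 {u, w}) - σ = γ u + γ w := by
  have hsub : ({u, w} : Finset V) ⊆ U := by
    intro a ha
    rcases Finset.mem_insert.mp ha with rfl | ha
    · exact huU
    · exact (Finset.mem_singleton.mp ha) ▸ hwU
  rcases lin_mem hU hlin hsub (isStable_pair hnadj) with h | ⟨hst, h⟩
  · rwa [Finset.sum_pair hne] at h
  · exact absurd hur.symm
      (hst r (Finset.mem_insert_self _ _) u
        (Finset.mem_insert_of_mem (Finset.mem_insert_self _ _)))

end Aux

/-- if every nonnegative inclusion-wise non-increasing function on the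
stable sets of the pattern of `𝒰` can be linearized by `(H, γ, σ)`, then the union
`P` of the 2-element stable sets in `U` is fully adjacent to `r` and contained in a
single member of `𝒰` (or empty). -/
theorem stmt5 (H : SimpleGraph V) (r : V) (U : Finset V)
    (hU : U = Finset.univ.erase r)
    (𝒰 : Finset (Finset V)) (hgrouping : IsGrouping H U 𝒰)
    (hlin : ∀ d : Finset (Finset V) → ℝ, NonnegNonincr H 𝒰 d →
      ∃ (γ : V → ℝ) (σ : ℝ), Linearizes H U 𝒰 γ σ d) :
    (∀ p ∈ U.filter (fun u => ∃ w ∈ U, w ≠ u ∧ ¬ H.Adj u w), H.Adj p r) ∧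
    (U.filter (fun u => ∃ w ∈ U, w ≠ u ∧ ¬ H.Adj u w) = ∅ ∨
      ∃ A ∈ 𝒰, U.filter (fun u => ∃ w ∈ U, w ≠ u ∧ ¬ H.Adj u w) ⊆ A) := by
  set P := U.filter (fun u => ∃ w ∈ U, w ≠ u ∧ ¬ H.Adj u w) with hPdef
  -- Part (a): every vertex of P is adjacent to r.
  have hA : ∀ p ∈ P, H.Adj p r := by
    intro p hp
    by_contra hpr
    rw [hPdef, Finset.mem_filter] at hp
    obtain ⟨hpU, w, hwU, hwp, hpw⟩ := hp
    -- counterexample function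
    set d1 : Finset (Finset V) → ℝ := fun 𝒮 => if 𝒮 = ∅ then 2 else 1 with hd1def
    have hd1 : NonnegNonincr H 𝒰 d1 := by
      constructor
      · intro 𝒮 _ _
        simp only [hd1def]
        split_ifs <;> norm_num
      · intro 𝒮 _ 𝒮' _ _ _ hsub
        simp only [hd1def]
        split_ifs with h1 h2 <;> try norm_num
        exact absurd (Finset.subset_empty.mp (h1 ▸ hsub)) h2
    obtain ⟨γ, σ, hγ⟩ := hlin d1 hd1
    obtain ⟨X, hX, hpX⟩ := exists_group hgrouping hpU
    obtain ⟨Y, hY, hwY⟩ := exists_group hgrouping hwU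
    have hd1e : d1 (bar 𝒰 (∅ : Finset V)) = 2 := by rw [bar_empty]; simp [hd1def]
    have hd1p : d1 (bar 𝒰 {p}) = 1 := by
      rw [bar_singleton hgrouping hX hpX]; simp [hd1def]
    have hd1w : d1 (bar 𝒰 {w}) = 1 := by
      rw [bar_singleton hgrouping hY hwY]; simp [hd1def]
    have hd1pw : d1 (bar 𝒰 {p, w}) = 1 := by
      rw [bar_pair hgrouping hX hY hpX hwY]; simp [hd1def]
    have hpU' : ({p} : Finset V) ⊆ U := Finset.singleton_subset_iff.mpr hpU
    have hwU' : ({w} : Finset V) ⊆ U := Finset.singleton_subset_iff.mpr hwU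
    have hpwU : ({p, w} : Finset V) ⊆ U := by
      intro a ha
      rcases Finset.mem_insert.mp ha with rfl | ha
      · exact hpU
      · exact (Finset.mem_singleton.mp ha) ▸ hwU
    have hrp : IsStable H (insert r {p}) := by
      have : (insert r {p} : Finset V) = {r, p} := rfl
      rw [this]
      exact isStable_pair (fun h => hpr h.symm)
    -- T = ∅
    have h0 := lin_ub hU hγ (Finset.empty_subset U) (by intro a ha; simp at ha)
    have h0u1 : (0 : ℝ) ≤ 2 - σ := by
      have := h0.1; rw [hd1e] at this; simpa using this
    have h0u2 : γ r ≤ 2 - σ := by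
      have := h0.2 (by simpa using isStable_singleton H r)
      rw [hd1e] at this; simpa using this
    have h0m : 2 - σ = 0 ∨ 2 - σ = γ r := by
      rcases lin_mem hU hγ (Finset.empty_subset U) (by intro a ha; simp at ha) with h | ⟨_, h⟩
      · left; rw [hd1e] at h; simpa using h
      · right; rw [hd1e] at h; simpa using h
    -- T = {p}
    have h1 := lin_ub hU hγ hpU' (isStable_singleton H p)
    have h1u1 : γ p ≤ 1 - σ := by
      have := h1.1; rw [hd1p] at this; simpa using this
    have h1u2 : γ r + γ p ≤ 1 - σ := by
      have := h1.2 hrp; rw [hd1p] at this; simpa using this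
    have h1m : 1 - σ = γ p ∨ 1 - σ = γ r + γ p := by
      rcases lin_mem hU hγ hpU' (isStable_singleton H p) with h | ⟨_, h⟩
      · left; rw [hd1p] at h; simpa using h
      · right; rw [hd1p] at h; simpa using h
    -- T = {w}
    have h3 := lin_ub hU hγ hwU' (isStable_singleton H w)
    have h3u1 : γ w ≤ 1 - σ := by
      have := h3.1; rw [hd1w] at this; simpa using this
    -- T = {p, w}
    have h2 := lin_ub hU hγ hpwU (isStable_pair hpw)
    have h2u1 : γ p + γ w ≤ 1 - σ := by
      have := h2.1; rw [hd1pw, Finset.sum_pair (Ne.symm hwp)] at this; linarith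
    have h2m : 1 - σ = γ p + γ w ∨
        (IsStable H (insert r {p, w}) ∧ 1 - σ = γ r + (γ p + γ w)) := by
      rcases lin_mem hU hγ hpwU (isStable_pair hpw) with h | ⟨hst, h⟩
      · left; rw [hd1pw, Finset.sum_pair (Ne.symm hwp)] at h; linarith
      · right
        refine ⟨hst, ?_⟩
        rw [hd1pw, Finset.sum_pair (Ne.symm hwp)] at h; linarith
    -- derive γ p = -1
    have hx : γ p = -1 := by
      rcases h0m with h0m | h0m <;> rcases h1m with h1m | h1m <;> linarith
    rcases h2m with h2m | ⟨hst, h2m⟩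
    · linarith
    · -- insert r {p,w} stable, so {r, w} is stable, giving an extra bound
      have hsub' : (insert r {w} : Finset V) ⊆ insert r {p, w} := by
        intro a ha
        rcases Finset.mem_insert.mp ha with rfl | ha
        · exact Finset.mem_insert_self _ _
        · exact Finset.mem_insert_of_mem (Finset.mem_insert_of_mem ha)
      have h3u2 : γ r + γ w ≤ 1 - σ := by
        have := h3.2 (isStable_subset hst hsub')
        rw [hd1w] at this; simpa using this
      linarith
  refine ⟨hA, ?_⟩
  -- Part (b): P is contained in a single group (or empty).
  -- key: no two vertices of P lie in different groups
  have key : ∀ p q : V, p ∈ P → q ∈ P → ∀ X ∈ 𝒰, ∀ Y ∈ 𝒰, p ∈ X → q ∈ Y → X ≠ Y → False := by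
    -- case 1 : nonadjacent vertices of P in different groups
    have case1 : ∀ p q : V, p ∈ U → q ∈ U → H.Adj p r → H.Adj q r → ¬ H.Adj p q →
        ∀ X ∈ 𝒰, ∀ Y ∈ 𝒰, p ∈ X → q ∈ Y → X ≠ Y → False := by
      intro p q hpU hqU hpr hqr hpq X hX Y hY hpX hqY hXY
      have hpq' : p ≠ q := by
        rintro rfl
        exact hXY (group_unique hgrouping hX hY hpX hqY)
      set d2 : Finset (Finset V) → ℝ := fun 𝒮 => if 𝒮.card ≤ 1 then 2 else 1 with hd2def
      have hd2 : NonnegNonincr H 𝒰 d2 := by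
        constructor
        · intro 𝒮 _ _
          simp only [hd2def]
          split_ifs <;> norm_num
        · intro 𝒮 _ 𝒮' _ _ _ hsub
          simp only [hd2def]
          split_ifs with h1 h2 <;> try norm_num
          exact absurd (le_trans (Finset.card_le_card hsub) h1) h2
      obtain ⟨γ, σ, hγ⟩ := hlin d2 hd2
      have hd2e : d2 (bar 𝒰 (∅ : Finset V)) = 2 := by rw [bar_empty]; simp [hd2def]
      have hd2p : d2 (bar 𝒰 {p}) = 2 := by
        rw [bar_singleton hgrouping hX hpX]; simp [hd2def]
      have hd2q : d2 (bar 𝒰 {q}) = 2 := by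
        rw [bar_singleton hgrouping hY hqY]; simp [hd2def]
      have hd2pq : d2 (bar 𝒰 {p, q}) = 1 := by
        rw [bar_pair hgrouping hX hY hpX hqY]
        simp only [hd2def]
        rw [Finset.card_pair hXY]
        norm_num
      have e0 := (lin_ub hU hγ (Finset.empty_subset U) (by intro a ha; simp at ha)).1
      rw [hd2e] at e0
      have e0' : (0 : ℝ) ≤ 2 - σ := by simpa using e0
      have e1 := lin_single_adj hU hγ hpU hpr
      rw [hd2p] at e1
      have e2 := lin_single_adj hU hγ hqU hqr
      rw [hd2q] at e2
      have e3 := lin_pair_adj hU hγ hpU hqU hpq' hpq hpr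
      rw [hd2pq] at e3
      linarith
    -- case 2 : two stable pairs within two distinct groups
    have case2 : ∀ p w q v : V, p ∈ U → w ∈ U → q ∈ U → v ∈ U →
        H.Adj p r → H.Adj w r → H.Adj q r → H.Adj v r →
        p ≠ w → ¬ H.Adj p w → q ≠ v → ¬ H.Adj q v →
        ∀ X ∈ 𝒰, ∀ Y ∈ 𝒰, p ∈ X → w ∈ X → q ∈ Y → v ∈ Y → X ≠ Y → False := by
      intro p w q v hpU hwU hqU hvU hpr hwr hqr hvr hpw hpwa hqv hqva X hX Y hY hpX hwX hqY hvY hXY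
      set d3 : Finset (Finset V) → ℝ := fun 𝒮 => if X ∈ 𝒮 then 0 else 1 with hd3def
      have hd3 : NonnegNonincr H 𝒰 d3 := by
        constructor
        · intro 𝒮 _ _
          simp only [hd3def]
          split_ifs <;> norm_num
        · intro 𝒮 _ 𝒮' _ _ _ hsub
          by_cases h1 : X ∈ 𝒮
          · simp [hd3def, h1, hsub h1]
          · simp only [hd3def, if_neg h1]
            split_ifs <;> norm_num
      obtain ⟨γ, σ, hγ⟩ := hlin d3 hd3
      have hd3p : d3 (bar 𝒰 {p}) = 0 := by
        rw [bar_singleton hgrouping hX hpX]; simp [hd3def]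
      have hd3w : d3 (bar 𝒰 {w}) = 0 := by
        rw [bar_singleton hgrouping hX hwX]; simp [hd3def]
      have hd3q : d3 (bar 𝒰 {q}) = 1 := by
        rw [bar_singleton hgrouping hY hqY]; simp [hd3def, hXY]
      have hd3v : d3 (bar 𝒰 {v}) = 1 := by
        rw [bar_singleton hgrouping hY hvY]; simp [hd3def, hXY]
      have hd3pw : d3 (bar 𝒰 {p, w}) = 0 := by
        rw [bar_pair hgrouping hX hX hpX hwX]; simp [hd3def]
      have hd3qv : d3 (bar 𝒰 {q, v}) = 1 := by
        rw [bar_pair hgrouping hY hY hqY hvY]; simp [hd3def, hXY]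
      have e1 := lin_single_adj hU hγ hpU hpr
      rw [hd3p] at e1
      have e2 := lin_single_adj hU hγ hwU hwr
      rw [hd3w] at e2
      have e3 := lin_pair_adj hU hγ hpU hwU hpw hpwa hpr
      rw [hd3pw] at e3
      have e4 := lin_single_adj hU hγ hqU hqr
      rw [hd3q] at e4
      have e5 := lin_single_adj hU hγ hvU hvr
      rw [hd3v] at e5
      have e6 := lin_pair_adj hU hγ hqU hvU hqv hqva hqr
      rw [hd3qv] at e6
      linarith
    intro p q hp hq X hX Y hY hpX hqY hXY
    have hpr : H.Adj p r := hA p hp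
    have hqr : H.Adj q r := hA q hq
    rw [hPdef, Finset.mem_filter] at hp hq
    obtain ⟨hpU, w, hwU, hwp, hpwa⟩ := hp
    obtain ⟨hqU, v, hvU, hvq, hqva⟩ := hq
    have hwP : w ∈ P := by
      rw [hPdef, Finset.mem_filter]
      exact ⟨hwU, p, hpU, Ne.symm hwp, fun h => hpwa h.symm⟩
    have hvP : v ∈ P := by
      rw [hPdef, Finset.mem_filter]
      exact ⟨hvU, q, hqU, Ne.symm hvq, fun h => hqva h.symm⟩
    have hwr : H.Adj w r := hA w hwP
    have hvr : H.Adj v r := hA v hvP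
    by_cases hpq : H.Adj p q
    · by_cases hwX : w ∈ X
      · by_cases hvY : v ∈ Y
        · exact case2 p w q v hpU hwU hqU hvU hpr hwr hqr hvr (Ne.symm hwp)
            (fun h => hpwa h) hvq.symm (fun h => hqva h) X hX Y hY hpX hwX hqY hvY hXY
        · obtain ⟨Z, hZ, hvZ⟩ := exists_group hgrouping hvU
          have hYZ : Y ≠ Z := fun h => hvY (h ▸ hvZ)
          exact case1 q v hqU hvU hqr hvr hqva Y hY Z hZ hqY hvZ hYZ
      · obtain ⟨Z, hZ, hwZ⟩ := exists_group hgrouping hwU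
        have hXZ : X ≠ Z := fun h => hwX (h ▸ hwZ)
        exact case1 p w hpU hwU hpr hwr hpwa X hX Z hZ hpX hwZ hXZ
    · exact case1 p q hpU hqU hpr hqr hpq X hX Y hY hpX hqY hXY
  -- conclude
  by_cases hP : P = ∅
  · exact Or.inl hP
  · right
    obtain ⟨p, hp⟩ := Finset.nonempty_of_ne_empty hP
    have hpU : p ∈ U := (Finset.mem_filter.mp (hPdef ▸ hp)).1
    obtain ⟨X, hX, hpX⟩ := exists_group hgrouping hpU
    refine ⟨X, hX, fun q hq => ?_⟩
    by_contra hqX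
    have hqU : q ∈ U := (Finset.mem_filter.mp (hPdef ▸ hq)).1
    obtain ⟨Y, hY, hqY⟩ := exists_group hgrouping hqU
    have hXY : X ≠ Y := fun h => hqX (h ▸ hqY)
    exact key p q hp hq X hX Y hY hpX hqY hXY
end

section
/- (Balas) Let P₁,…,P_k ⊆ ℝ^n be nonempty polytopes with extended formulations P_i = {x : ∃ y_i, A_i x + B_i y_i ≤ d_i}. Then conv(P₁ ∪ ⋯ ∪ P_k) = { x : ∃ x¹,…,x^k, y¹,…,y^k, λ ∈ ℝ^k, x = x¹+⋯+x^k, λ₁+⋯+λ_k = 1, λ ≥ 0, and A_i x^i + B_i y^i − λ_i d_i ≤ 0 for all i }. -/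
/-!
A point of `conv (⋃ Pᵢ)` is `∑ λᵢ zᵢ` with `zᵢ ∈ Pᵢ`; putting `xᵢ = λᵢ zᵢ` and `yᵢ = λᵢ wᵢ`
for a lift `wᵢ` of `zᵢ` gives a solution of the disjunctive system, whose solution set is
convex. Conversely, a solution with `λᵢ > 0` yields `xᵢ / λᵢ ∈ Pᵢ`, while for `λᵢ = 0` the
pair `(xᵢ, yᵢ)` is a recession direction of the lifted polyhedron, so `xᵢ` is a recession
direction of `Pᵢ`, which vanishes because `Pᵢ` is bounded and nonempty.
-/

open Finset Matrix

section Recession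

variable {E : Type*} [NormedAddCommGroup E] [NormedSpace ℝ E]

lemma eq_zero_of_isBounded_of_forall_add_smul_mem {s : Set E} (hs : Bornology.IsBounded s)
    {x v : E} (hray : ∀ t : ℝ, 0 ≤ t → x + t • v ∈ s) : v = 0 := by
  obtain ⟨C, hC⟩ := hs.exists_norm_le
  by_contra hv
  have hv_pos : 0 < ‖v‖ := norm_pos_iff.mpr hv
  have hC_nonneg : 0 ≤ C := (norm_nonneg _).trans (hC _ (by simpa using hray 0 le_rfl))
  set t := (C + ‖x‖ + 1) / ‖v‖
  have ht : 0 ≤ t := by positivity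
  have htv : ‖t • v‖ = C + ‖x‖ + 1 := by
    rw [norm_smul, Real.norm_of_nonneg ht, div_mul_cancel₀ _ hv_pos.ne']
  have : ‖t • v‖ ≤ C + ‖x‖ := calc
    ‖t • v‖ = ‖(x + t • v) - x‖ := by rw [add_sub_cancel_left]
    _ ≤ ‖x + t • v‖ + ‖x‖ := norm_sub_le _ _
    _ ≤ C + ‖x‖ := by gcongr; exact hC _ (hray t ht)
  linarith

end Recession

section ExtendedFormulation

variable {m n q : Type*} [Fintype n] [Fintype q]

def extendedPolyhedron (A : Matrix m n ℝ) (B : Matrix m q ℝ) (d : m → ℝ) : Set (n → ℝ) :=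
  {x | ∃ y, A *ᵥ x + B *ᵥ y ≤ d}

variable {A : Matrix m n ℝ} {B : Matrix m q ℝ} {d : m → ℝ}

lemma inv_smul_mem_extendedPolyhedron {t : ℝ} (ht : 0 < t) {x : n → ℝ} {y : q → ℝ}
    (h : A *ᵥ x + B *ᵥ y ≤ t • d) : t⁻¹ • x ∈ extendedPolyhedron A B d := by
  refine ⟨t⁻¹ • y, ?_⟩
  rw [mulVec_smul, mulVec_smul, ← smul_add, inv_smul_le_iff_of_pos ht]
  exact h

lemma add_smul_mem_extendedPolyhedron {x₀ x : n → ℝ} {y : q → ℝ}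
    (hx₀ : x₀ ∈ extendedPolyhedron A B d) (h : A *ᵥ x + B *ᵥ y ≤ 0) {t : ℝ} (ht : 0 ≤ t) :
    x₀ + t • x ∈ extendedPolyhedron A B d := by
  obtain ⟨y₀, hy₀⟩ := hx₀
  refine ⟨y₀ + t • y, ?_⟩
  have hdir : t • (A *ᵥ x + B *ᵥ y) ≤ 0 := smul_nonpos_of_nonneg_of_nonpos ht h
  calc A *ᵥ (x₀ + t • x) + B *ᵥ (y₀ + t • y)
      = (A *ᵥ x₀ + B *ᵥ y₀) + t • (A *ᵥ x + B *ᵥ y) := by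
        simp only [mulVec_add, mulVec_smul, smul_add]; abel
    _ ≤ d + 0 := add_le_add hy₀ hdir
    _ = d := add_zero d

lemma eq_zero_of_mulVec_add_mulVec_nonpos (hne : (extendedPolyhedron A B d).Nonempty)
    (hbdd : Bornology.IsBounded (extendedPolyhedron A B d)) {x : n → ℝ} {y : q → ℝ}
    (h : A *ᵥ x + B *ᵥ y ≤ 0) : x = 0 :=
  let ⟨_, hx₀⟩ := hne
  eq_zero_of_isBounded_of_forall_add_smul_mem hbdd
    fun _ ht => add_smul_mem_extendedPolyhedron hx₀ h ht

lemma exists_mem_extendedPolyhedron_smul_eq (hne : (extendedPolyhedron A B d).Nonempty)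
    (hbdd : Bornology.IsBounded (extendedPolyhedron A B d)) {t : ℝ} (ht : 0 ≤ t)
    {x : n → ℝ} {y : q → ℝ} (h : A *ᵥ x + B *ᵥ y ≤ t • d) :
    ∃ z ∈ extendedPolyhedron A B d, x = t • z := by
  rcases ht.eq_or_lt with rfl | ht
  · have hx : x = 0 := eq_zero_of_mulVec_add_mulVec_nonpos hne hbdd (by simpa using h)
    obtain ⟨z, hz⟩ := hne
    exact ⟨z, hz, by rw [hx, zero_smul]⟩
  · exact ⟨t⁻¹ • x, inv_smul_mem_extendedPolyhedron ht h, (smul_inv_smul₀ ht.ne' x).symm⟩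

end ExtendedFormulation

section Disjunctive

variable {ι n : Type*} [Fintype ι] [Fintype n] {m q : ι → Type*}
  [∀ i, Fintype (q i)]

def disjunctiveHull (A : ∀ i, Matrix (m i) n ℝ) (B : ∀ i, Matrix (m i) (q i) ℝ)
    (d : ∀ i, m i → ℝ) : Set (n → ℝ) :=
  {x | ∃ (xs : ι → n → ℝ) (ys : ∀ i, q i → ℝ) (lam : ι → ℝ),
    x = ∑ i, xs i ∧ ∑ i, lam i = 1 ∧ (∀ i, 0 ≤ lam i) ∧
    ∀ i, A i *ᵥ xs i + B i *ᵥ ys i ≤ lam i • d i}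

variable {A : ∀ i, Matrix (m i) n ℝ} {B : ∀ i, Matrix (m i) (q i) ℝ} {d : ∀ i, m i → ℝ}

lemma extendedPolyhedron_subset_disjunctiveHull [DecidableEq ι] (i : ι) :
    extendedPolyhedron (A i) (B i) (d i) ⊆ disjunctiveHull A B d := by
  rintro x ⟨y, hy⟩
  refine ⟨Pi.single i x, Pi.single i y, Pi.single i 1, by simp, by simp, ?_, fun j => ?_⟩
  · intro j
    rcases eq_or_ne j i with rfl | hj <;> simp [*]
  · rcases eq_or_ne j i with rfl | hj
    · simpa using hy
    · simp [hj]

lemma convex_disjunctiveHull : Convex ℝ (disjunctiveHull A B d) := by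
  rintro _ ⟨xs, ys, lam, rfl, hsum, hlam, h⟩ _ ⟨xs', ys', lam', rfl, hsum', hlam', h'⟩
    a b ha hb hab
  refine ⟨a • xs + b • xs', a • ys + b • ys', a • lam + b • lam', ?_, ?_, fun i => ?_,
    fun i => ?_⟩
  · simp only [Pi.add_apply, Pi.smul_apply, sum_add_distrib, smul_sum]
  · simp only [Pi.add_apply, Pi.smul_apply, smul_eq_mul, sum_add_distrib, ← mul_sum, hsum,
      hsum', mul_one, hab]
  · have := hlam i; have := hlam' i
    simp only [Pi.add_apply, Pi.smul_apply, smul_eq_mul]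
    positivity
  · calc A i *ᵥ (a • xs + b • xs') i + B i *ᵥ (a • ys + b • ys') i
        = a • (A i *ᵥ xs i + B i *ᵥ ys i) + b • (A i *ᵥ xs' i + B i *ᵥ ys' i) := by
          simp only [Pi.add_apply, Pi.smul_apply, mulVec_add, mulVec_smul, smul_add]; abel
      _ ≤ a • (lam i • d i) + b • (lam' i • d i) := by gcongr <;> [exact h i; exact h' i]
      _ = (a • lam + b • lam') i • d i := by
          simp only [Pi.add_apply, Pi.smul_apply, add_smul, smul_smul, smul_eq_mul]

lemma disjunctiveHull_subset_convexHull
    (hne : ∀ i, (extendedPolyhedron (A i) (B i) (d i)).Nonempty)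
    (hbdd : ∀ i, Bornology.IsBounded (extendedPolyhedron (A i) (B i) (d i))) :
    disjunctiveHull A B d ⊆ convexHull ℝ (⋃ i, extendedPolyhedron (A i) (B i) (d i)) := by
  rintro _ ⟨xs, ys, lam, rfl, hsum, hlam, h⟩
  choose z hz hxs using fun i =>
    exists_mem_extendedPolyhedron_smul_eq (hne i) (hbdd i) (hlam i) (h i)
  simp only [hxs]
  exact (convex_convexHull ℝ _).sum_mem (fun i _ => hlam i) hsum
    fun i _ => subset_convexHull ℝ _ (Set.mem_iUnion_of_mem i (hz i))

theorem convexHull_iUnion_extendedPolyhedron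
    (hne : ∀ i, (extendedPolyhedron (A i) (B i) (d i)).Nonempty)
    (hbdd : ∀ i, Bornology.IsBounded (extendedPolyhedron (A i) (B i) (d i))) :
    convexHull ℝ (⋃ i, extendedPolyhedron (A i) (B i) (d i)) = disjunctiveHull A B d := by
  classical
  exact (convexHull_min (Set.iUnion_subset extendedPolyhedron_subset_disjunctiveHull)
      convex_disjunctiveHull).antisymm (disjunctiveHull_subset_convexHull hne hbdd)

end Disjunctive

/-- Balas: for nonempty bounded polytopes `P i` given by extended
formulations `P i = {x : ∃ y, A i *ᵥ x + B i *ᵥ y ≤ d i}`, the convex hull of their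
union is described by the disjunctive system
`x = Σ xᵢ, Σ λᵢ = 1, λ ≥ 0, A i *ᵥ xᵢ + B i *ᵥ yᵢ ≤ λᵢ • d i`. -/
theorem stmt15 (n k : ℕ) (m q : Fin k → ℕ)
    (A : ∀ i, Matrix (Fin (m i)) (Fin n) ℝ)
    (B : ∀ i, Matrix (Fin (m i)) (Fin (q i)) ℝ)
    (d : ∀ i, Fin (m i) → ℝ)
    (P : Fin k → Set (Fin n → ℝ))
    (hP : ∀ i, P i = {x | ∃ y : Fin (q i) → ℝ,
      (A i).mulVec x + (B i).mulVec y ≤ d i})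
    (hne : ∀ i, (P i).Nonempty)
    (hbdd : ∀ i, Bornology.IsBounded (P i)) :
    convexHull ℝ (⋃ i, P i) =
      {x : Fin n → ℝ | ∃ (xs : Fin k → Fin n → ℝ) (ys : ∀ i, Fin (q i) → ℝ)
        (lam : Fin k → ℝ),
        x = ∑ i, xs i ∧ (∑ i, lam i) = 1 ∧ (∀ i, 0 ≤ lam i) ∧
        ∀ i, (A i).mulVec (xs i) + (B i).mulVec (ys i) ≤ lam i • d i} := by
  obtain rfl : P = fun i => extendedPolyhedron (A i) (B i) (d i) := funext hP
  exact convexHull_iUnion_extendedPolyhedron hne hbdd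
end
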